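/- Stuttering simulation equivalence (without epistemic clauses) preserves ACTL*_{-X} formulas: if M' stuttering-simulates M and M stuttering-simulates M', then the initial state of M satisfies an ACTL*_{-X} formula φ iff the initial state of M' does. -/
import Mathlib


-- State and path formulas of ACTL* without next (negation at atoms only,
-- operators ∧, ∨, U, R and the universal path quantifier A).
mutual
inductive TSForm (AP : Type) : Type where
  | atom : AP → TSForm AP
  | natom : AP → TSForm AP
  | sand : TSForm AP → TSForm AP → TSForm AP
  | sor : TSForm AP → TSForm AP → TSForm AP
  | aall : TPForm AP → TSForm AP

inductive TPForm (AP : Type) : Type where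
  | ofState : TSForm AP → TPForm AP
  | pand : TPForm AP → TPForm AP → TPForm AP
  | por : TPForm AP → TPForm AP → TPForm AP
  | puntil : TPForm AP → TPForm AP → TPForm AP
  | prelease : TPForm AP → TPForm AP → TPForm AP
end

/-- A Kripke structure: states, a transition relation, an initial state and
a labeling of states with atomic propositions. -/
structure Kripke (AP : Type) where
  G : Type
  R : G → G → Prop
  init : G
  val : G → AP → Prop

def Kripke.ValidPath {AP : Type} (M : Kripke AP) (π : ℕ → M.G) : Prop :=
  ∀ j, M.R (π j) (π (j + 1))

def shiftPath {G : Type} (π : ℕ → G) (i : ℕ) : ℕ → G := fun j => π (i + j)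

-- Satisfaction of ACTL*_{-X} state formulas and path formulas.
mutual
def tsat {AP : Type} (M : Kripke AP) : TSForm AP → M.G → Prop
  | .atom p, g => M.val g p
  | .natom p, g => ¬ M.val g p
  | .sand φ ψ, g => tsat M φ g ∧ tsat M ψ g
  | .sor φ ψ, g => tsat M φ g ∨ tsat M ψ g
  | .aall φ, g => ∀ π, M.ValidPath π → π 0 = g → tpsat M φ π

def tpsat {AP : Type} (M : Kripke AP) : TPForm AP → (ℕ → M.G) → Prop
  | .ofState φ, π => tsat M φ (π 0)
  | .pand φ ψ, π => tpsat M φ π ∧ tpsat M ψ π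
  | .por φ ψ, π => tpsat M φ π ∨ tpsat M ψ π
  | .puntil φ ψ, π => ∃ i, tpsat M ψ (shiftPath π i) ∧ ∀ j < i, tpsat M φ (shiftPath π j)
  | .prelease φ ψ, π => ∀ i, (∀ j < i, ¬ tpsat M φ (shiftPath π j)) → tpsat M ψ (shiftPath π i)
end

/-- A stuttering simulation between Kripke structures: initial states are
related; related states have equal labels; and every path from a related
state of the first structure is matched by a path of the second, with
partitions into corresponding finite nonempty blocks (given by the strictly
monotone block boundary functions `b`, `b'` starting at `0`) of pairwise
related states. -/
def StutterSimK {AP : Type} (M M' : Kripke AP) (sim : M.G → M'.G → Prop) : Prop :=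
  sim M.init M'.init ∧
  ∀ g g', sim g g' →
    ((∀ p, M.val g p ↔ M'.val g' p) ∧
     (∀ π, M.ValidPath π → π 0 = g →
        ∃ π', M'.ValidPath π' ∧ π' 0 = g' ∧
          ∃ b b' : ℕ → ℕ, b 0 = 0 ∧ b' 0 = 0 ∧ StrictMono b ∧ StrictMono b' ∧
            ∀ j m m', b j ≤ m → m < b (j + 1) → b' j ≤ m' → m' < b' (j + 1) →
              sim (π m) (π' m')))

/-- Matching of two paths by corresponding finite nonempty blocks of
pairwise `s`-related states. -/
def PM {G G' : Type} (s : G → G' → Prop) (π : ℕ → G) (π' : ℕ → G') : Prop :=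
  ∃ b b' : ℕ → ℕ, b 0 = 0 ∧ b' 0 = 0 ∧ StrictMono b ∧ StrictMono b' ∧
    ∀ j m m', b j ≤ m → m < b (j + 1) → b' j ≤ m' → m' < b' (j + 1) →
      s (π m) (π' m')

lemma block_exists (b : ℕ → ℕ) (hb0 : b 0 = 0) (hb : StrictMono b) (m : ℕ) :
    ∃ j, b j ≤ m ∧ m < b (j + 1) := by
  classical
  set j := Nat.findGreatest (fun j => b j ≤ m) m with hj
  have hP0 : (fun j => b j ≤ m) 0 := by simp [hb0]
  have h1 : b j ≤ m :=
    Nat.findGreatest_spec (P := fun j => b j ≤ m) (Nat.zero_le m) hP0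
  refine ⟨j, h1, ?_⟩
  by_contra hc
  push_neg at hc
  have hle : j + 1 ≤ m := le_trans hb.le_apply hc
  exact Nat.findGreatest_is_greatest (P := fun j => b j ≤ m)
    (Nat.lt_succ_self j) hle hc

lemma PM_zero {G G' : Type} {s : G → G' → Prop} {π : ℕ → G} {π' : ℕ → G'}
    (h : PM s π π') : s (π 0) (π' 0) := by
  obtain ⟨b, b', hb0, hb'0, hb, hb', hblk⟩ := h
  have h1 : b 0 < b (0 + 1) := hb (by omega)
  have h2 : b' 0 < b' (0 + 1) := hb' (by omega)
  exact hblk 0 0 0 (by omega) (by omega) (by omega) (by omega)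

lemma PM_shift_core {G G' : Type} {s : G → G' → Prop} {π : ℕ → G} {π' : ℕ → G'}
    {b b' : ℕ → ℕ}
    (hb : StrictMono b) (hb' : StrictMono b')
    (hblk : ∀ j m m', b j ≤ m → m < b (j + 1) → b' j ≤ m' → m' < b' (j + 1) →
      s (π m) (π' m'))
    (j m m' : ℕ) (h1 : b j ≤ m) (h2 : m < b (j + 1))
    (h3 : b' j ≤ m') (h4 : m' < b' (j + 1)) :
    PM s (shiftPath π m) (shiftPath π' m') := by
  refine ⟨fun k => b (j + k) - m, fun k => b' (j + k) - m',
    show b j - m = 0 by omega, show b' j - m' = 0 by omega, ?_, ?_, ?_⟩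
  · apply strictMono_nat_of_lt_succ
    intro k
    show b (j + k) - m < b (j + k + 1) - m
    have hs : b (j + k) < b (j + k + 1) := hb (by omega)
    have hm : b (j + 1) ≤ b (j + k + 1) := hb.monotone (by omega)
    omega
  · apply strictMono_nat_of_lt_succ
    intro k
    show b' (j + k) - m' < b' (j + k + 1) - m'
    have hs : b' (j + k) < b' (j + k + 1) := hb' (by omega)
    have hm : b' (j + 1) ≤ b' (j + k + 1) := hb'.monotone (by omega)
    omega
  · intro k mm mm' l1 l2 l3 l4
    have l1' : b (j + k) - m ≤ mm := l1
    have l2' : mm < b (j + k + 1) - m := l2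
    have l3' : b' (j + k) - m' ≤ mm' := l3
    have l4' : mm' < b' (j + k + 1) - m' := l4
    show s (π (m + mm)) (π' (m' + mm'))
    exact hblk (j + k) (m + mm) (m' + mm')
      (by omega) (by omega) (by omega) (by omega)

lemma PM_shift_right {G G' : Type} {s : G → G' → Prop} {π : ℕ → G} {π' : ℕ → G'}
    (h : PM s π π') (m' : ℕ) :
    ∃ m, PM s (shiftPath π m) (shiftPath π' m') ∧
      ∀ k < m, ∃ k' < m', PM s (shiftPath π k) (shiftPath π' k') := by
  obtain ⟨b, b', hb0, hb'0, hb, hb', hblk⟩ := h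
  obtain ⟨j, hj1, hj2⟩ := block_exists b' hb'0 hb' m'
  refine ⟨b j, PM_shift_core hb hb' hblk j (b j) m' le_rfl (hb (by omega)) hj1 hj2,
    ?_⟩
  intro k hk
  obtain ⟨i, hi1, hi2⟩ := block_exists b hb0 hb k
  have hij : i < j := by
    by_contra hc
    have : b j ≤ b i := hb.monotone (by omega)
    omega
  have hbi : b' i < b' j := hb' hij
  exact ⟨b' i, by omega,
    PM_shift_core hb hb' hblk i k (b' i) hi1 hi2 le_rfl (hb' (by omega))⟩

lemma PM_shift_left {G G' : Type} {s : G → G' → Prop} {π : ℕ → G} {π' : ℕ → G'}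
    (h : PM s π π') (m : ℕ) :
    ∃ m', PM s (shiftPath π m) (shiftPath π' m') ∧
      ∀ k' < m', ∃ k < m, PM s (shiftPath π k) (shiftPath π' k') := by
  obtain ⟨b, b', hb0, hb'0, hb, hb', hblk⟩ := h
  obtain ⟨j, hj1, hj2⟩ := block_exists b hb0 hb m
  refine ⟨b' j, PM_shift_core hb hb' hblk j m (b' j) hj1 hj2 le_rfl (hb' (by omega)),
    ?_⟩
  intro k' hk'
  obtain ⟨i, hi1, hi2⟩ := block_exists b' hb'0 hb' k'
  have hij : i < j := by
    by_contra hc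
    have : b' j ≤ b' i := hb'.monotone (by omega)
    omega
  have hbi : b i < b j := hb hij
  exact ⟨b i, by omega,
    PM_shift_core hb hb' hblk i (b i) k' le_rfl (hb (by omega)) hi1 hi2⟩

mutual
theorem transferS {AP : Type} (M M' : Kripke AP) (sim : M.G → M'.G → Prop)
    (hsim : ∀ g g', sim g g' →
      ((∀ p, M.val g p ↔ M'.val g' p) ∧
       (∀ π, M.ValidPath π → π 0 = g →
          ∃ π', M'.ValidPath π' ∧ π' 0 = g' ∧ PM sim π π')))
    (φ : TSForm AP) : ∀ g g', sim g g' → tsat M' φ g' → tsat M φ g := by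
  match φ with
  | .atom p =>
    intro g g' hgg' h
    exact ((hsim g g' hgg').1 p).mpr h
  | .natom p =>
    intro g g' hgg' h
    simp only [tsat] at h ⊢
    exact fun hv => h (((hsim g g' hgg').1 p).mp hv)
  | .sand φ1 φ2 =>
    intro g g' hgg' h
    exact ⟨transferS M M' sim hsim φ1 g g' hgg' h.1,
           transferS M M' sim hsim φ2 g g' hgg' h.2⟩
  | .sor φ1 φ2 =>
    intro g g' hgg' h
    rcases h with h | h
    · exact Or.inl (transferS M M' sim hsim φ1 g g' hgg' h)
    · exact Or.inr (transferS M M' sim hsim φ2 g g' hgg' h)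
  | .aall ψ =>
    intro g g' hgg' h
    intro π hπ hπ0
    obtain ⟨π', hπ', hπ'0, hpm⟩ := (hsim g g' hgg').2 π hπ hπ0
    exact transferP M M' sim hsim ψ π π' hpm (h π' hπ' hπ'0)

theorem transferP {AP : Type} (M M' : Kripke AP) (sim : M.G → M'.G → Prop)
    (hsim : ∀ g g', sim g g' →
      ((∀ p, M.val g p ↔ M'.val g' p) ∧
       (∀ π, M.ValidPath π → π 0 = g →
          ∃ π', M'.ValidPath π' ∧ π' 0 = g' ∧ PM sim π π')))
    (φ : TPForm AP) : ∀ (π : ℕ → M.G) (π' : ℕ → M'.G),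
      PM sim π π' → tpsat M' φ π' → tpsat M φ π := by
  match φ with
  | .ofState ψ =>
    intro π π' hpm h
    exact transferS M M' sim hsim ψ (π 0) (π' 0) (PM_zero hpm) h
  | .pand φ1 φ2 =>
    intro π π' hpm h
    exact ⟨transferP M M' sim hsim φ1 π π' hpm h.1,
           transferP M M' sim hsim φ2 π π' hpm h.2⟩
  | .por φ1 φ2 =>
    intro π π' hpm h
    rcases h with h | h
    · exact Or.inl (transferP M M' sim hsim φ1 π π' hpm h)
    · exact Or.inr (transferP M M' sim hsim φ2 π π' hpm h)
  | .puntil φ1 φ2 =>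
    intro π π' hpm h
    obtain ⟨i', h2, h1⟩ := h
    obtain ⟨i, hpmi, hpre⟩ := PM_shift_right hpm i'
    refine ⟨i, transferP M M' sim hsim φ2 _ _ hpmi h2, ?_⟩
    intro m hm
    obtain ⟨m', hm', hpm'⟩ := hpre m hm
    exact transferP M M' sim hsim φ1 _ _ hpm' (h1 m' hm')
  | .prelease φ1 φ2 =>
    intro π π' hpm h
    intro i hne
    obtain ⟨i', hpmi, hpre⟩ := PM_shift_left hpm i
    refine transferP M M' sim hsim φ2 _ _ hpmi (h i' ?_)
    intro j' hj' hφ'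
    obtain ⟨k, hk, hpm'⟩ := hpre j' hj'
    exact hne k hk (transferP M M' sim hsim φ1 _ _ hpm' hφ')
end

/-- Stuttering simulation equivalence preserves ACTL*_{-X}: if `M'`
stuttering-simulates `M` and `M` stuttering-simulates `M'`, then the initial
state of `M` satisfies `φ` iff the initial state of `M'` does. -/
theorem stuttering_equivalence_preserves_actl {AP : Type} (M M' : Kripke AP)
    (sim : M.G → M'.G → Prop) (sim' : M'.G → M.G → Prop)
    (h1 : StutterSimK M M' sim) (h2 : StutterSimK M' M sim')
    (φ : TSForm AP) :
    tsat M φ M.init ↔ tsat M' φ M'.init := by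
  obtain ⟨hi1, hs1⟩ := h1
  obtain ⟨hi2, hs2⟩ := h2
  constructor
  · exact transferS M' M sim' hs2 φ M'.init M.init hi2
  · exact transferS M M' sim hs1 φ M.init M'.init hi1
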